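/- For the equator ψ(x,y) = (cos x sin y, cos x cos y, sin x sin θ, sin x cos θ) in the Berger sphere S³_B(κ,τ), the coefficients of the first fundamental form are E = ⟨ψ_x,ψ_x⟩_(κ,τ) = 4/κ, F = ⟨ψ_x,ψ_y⟩_(κ,τ) = 0, and G = ⟨ψ_y,ψ_y⟩_(κ,τ) = (4τ²/(κα²)) cos²x, where α² = 2κτ²/(κ + 4τ² − (κ−4τ²)cos 2x). -/

import Mathlib

open Real
open scoped RealInnerProductSpace

noncomputable section

abbrev E4 := EuclideanSpace ℝ (Fin 4)

def e4 (a b c d : ℝ) : E4 := (WithLp.equiv 2 (Fin 4 → ℝ)).symm ![a, b, c, d]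


@[simp] lemma e4_app0 (a b c d : ℝ) : e4 a b c d 0 = a := rfl
@[simp] lemma e4_app1 (a b c d : ℝ) : e4 a b c d 1 = b := rfl
@[simp] lemma e4_app2 (a b c d : ℝ) : e4 a b c d 2 = c := rfl
@[simp] lemma e4_app3 (a b c d : ℝ) : e4 a b c d 3 = d := rfl

lemma inner_e4 (a b c d a' b' c' d' : ℝ) :
    ⟪e4 a b c d, e4 a' b' c' d'⟫ = a * a' + b * b' + c * c' + d * d' := by
  simp [PiLp.inner_apply, Fin.sum_univ_four, e4]
  ring

lemma hasDerivAt_e4 {fa fb fc fd : ℝ → ℝ} {a' b' c' d' x : ℝ}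
    (ha : HasDerivAt fa a' x) (hb : HasDerivAt fb b' x)
    (hc : HasDerivAt fc c' x) (hd : HasDerivAt fd d' x) :
    HasDerivAt (fun t => e4 (fa t) (fb t) (fc t) (fd t)) (e4 a' b' c' d') x := by
  have hg : HasDerivAt (fun t => (![fa t, fb t, fc t, fd t] : Fin 4 → ℝ))
      ![a', b', c', d'] x := by
    rw [hasDerivAt_pi]
    intro i
    fin_cases i <;> simpa
  have := ((PiLp.continuousLinearEquiv 2 ℝ (fun _ : Fin 4 => ℝ)).symm :
      (Fin 4 → ℝ) →L[ℝ] E4).hasFDerivAt.comp_hasDerivAt x hg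
  exact this

/-- The Hopf vector field `V(z,w) = (iz, iw)` on ℝ⁴ ≅ ℂ², with
`z = p₀ + i p₁`, `w = p₂ + i p₃`. -/
def hopfV (p : E4) : E4 := e4 (-(p 1)) (p 0) (-(p 3)) (p 2)

/-- The Berger metric `⟨X,Y⟩_(κ,τ) = (4/κ)(⟨X,Y⟩ + (4τ²/κ − 1)⟨X,V⟩⟨Y,V⟩)`
at the point `p ∈ S³`, where `⟨·,·⟩` is the round (Euclidean) metric. -/
def bergerMet (κ τ : ℝ) (p X Y : E4) : ℝ :=
  (4 / κ) * (⟪X, Y⟫ + (4 * τ ^ 2 / κ - 1) * ⟪X, hopfV p⟫ * ⟪Y, hopfV p⟫)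

/-- The equator `ψ(x,y) = (cos x sin y, cos x cos y, sin x sin θ, sin x cos θ)`. -/
def ψeq (θ x y : ℝ) : E4 :=
  e4 (cos x * sin y) (cos x * cos y) (sin x * sin θ) (sin x * cos θ)

/-- `ψ_x`, the partial derivative of the equator parametrization in `x`. -/
def ψeqx (θ x y : ℝ) : E4 := deriv (fun t => ψeq θ t y) x

/-- `ψ_y`, the partial derivative of the equator parametrization in `y`. -/
def ψeqy (θ x y : ℝ) : E4 := deriv (fun t => ψeq θ x t) y


lemma ψeqx_eq (θ x y : ℝ) :
    ψeqx θ x y = e4 (-sin x * sin y) (-sin x * cos y) (cos x * sin θ) (cos x * cos θ) := by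
  have h : HasDerivAt (fun t => ψeq θ t y)
      (e4 (-sin x * sin y) (-sin x * cos y) (cos x * sin θ) (cos x * cos θ)) x := by
    unfold ψeq
    exact hasDerivAt_e4 ((Real.hasDerivAt_cos x).mul_const _)
      ((Real.hasDerivAt_cos x).mul_const _)
      ((Real.hasDerivAt_sin x).mul_const _)
      ((Real.hasDerivAt_sin x).mul_const _)
  exact h.deriv

lemma ψeqy_eq (θ x y : ℝ) :
    ψeqy θ x y = e4 (cos x * cos y) (cos x * -sin y) 0 0 := by
  have h : HasDerivAt (fun t => ψeq θ x t)
      (e4 (cos x * cos y) (cos x * -sin y) 0 0) y := by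
    unfold ψeq
    exact hasDerivAt_e4 ((Real.hasDerivAt_sin y).const_mul _)
      ((Real.hasDerivAt_cos y).const_mul _)
      (hasDerivAt_const _ _) (hasDerivAt_const _ _)
  exact h.deriv

/-- For the equator ψ in the Berger sphere S³_B(κ,τ), the first
fundamental form coefficients are `E = 4/κ`, `F = 0`, and
`G = (4τ²/(κα²)) cos²x`, where `α² = 2κτ²/(κ + 4τ² − (κ−4τ²)cos 2x)`. -/
theorem equator_first_fundamental_form (κ τ θ x y : ℝ) (hκ : 0 < κ) (hτ : τ ≠ 0) :
    bergerMet κ τ (ψeq θ x y) (ψeqx θ x y) (ψeqx θ x y) = 4 / κ ∧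
    bergerMet κ τ (ψeq θ x y) (ψeqx θ x y) (ψeqy θ x y) = 0 ∧
    bergerMet κ τ (ψeq θ x y) (ψeqy θ x y) (ψeqy θ x y) =
      4 * τ ^ 2 / (κ * (2 * κ * τ ^ 2 / (κ + 4 * τ ^ 2 - (κ - 4 * τ ^ 2) * cos (2 * x)))) *
        (cos x) ^ 2 := by
  have hκ' : κ ≠ 0 := ne_of_gt hκ
  have px : sin x ^ 2 = 1 - cos x ^ 2 := by
    have := sin_sq_add_cos_sq x; linarith
  have py : sin y ^ 2 = 1 - cos y ^ 2 := by
    have := sin_sq_add_cos_sq y; linarith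
  have pθ : sin θ ^ 2 = 1 - cos θ ^ 2 := by
    have := sin_sq_add_cos_sq θ; linarith
  have hc2 : cos (2 * x) = 2 * cos x ^ 2 - 1 := cos_two_mul x
  have hD : κ + 4 * τ ^ 2 - (κ - 4 * τ ^ 2) * cos (2 * x) ≠ 0 := by
    rw [hc2]
    have h1 : 0 ≤ cos x ^ 2 := sq_nonneg _
    have h2 : cos x ^ 2 ≤ 1 := cos_sq_le_one x
    have hτ2 : 0 < τ ^ 2 := by positivity
    nlinarith [mul_pos hκ hτ2, mul_nonneg hτ2.le h1, mul_nonneg hκ.le (sub_nonneg.2 h2)]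
  rw [ψeqx_eq, ψeqy_eq]
  unfold bergerMet hopfV ψeq
  simp only [e4_app0, e4_app1, e4_app2, e4_app3, inner_e4]
  refine ⟨?_, ?_, ?_⟩
  · field_simp
    linear_combination (κ*sin x^2)*py + (κ*cos x^2)*pθ + κ*px
  · ring_nf
  · rw [hc2]
    field_simp
    linear_combination (2*κ*cos x^2 + 2*(4*τ^2-κ)*cos x^4*(sin y^2+cos y^2+1))*py
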